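/- arXiv:math/9307224 — 2 statements merged into one kernel-verified Lean document; each statement's English description precedes it below -/
import Mathlib

section
/- Let 0 < μ < 1/2 and x ∈ ℂ. Then e^x = (1/B(1/2 − μ, μ)) ∫_{−1}^{1} e_{−μ}(x t) |t|^{−2μ} (1−t)^{μ−1} (1+t)^{μ} dt. -/
open MeasureTheory
open scoped BigOperators Nat

/-- Generalized factorial `γ_μ(n)`: `γ_μ(0) = 1`,
`γ_μ(n+1) = (n + 1 + 2μ θ_{n+1}) γ_μ(n)` where `θ_k = 1` if `k` is odd, `0` if even. -/
noncomputable def genGamma (μ : ℝ) : ℕ → ℝ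
  | 0 => 1
  | n + 1 => ((n : ℝ) + 1 + 2 * μ * (if (n + 1) % 2 = 1 then (1 : ℝ) else 0)) * genGamma μ n

/-- Generalized exponential function `e_μ(z) = Σ_{n≥0} z^n / γ_μ(n)`. -/
noncomputable def genExp (μ : ℝ) (z : ℂ) : ℂ :=
  ∑' n : ℕ, z ^ n / (genGamma μ n : ℂ)

/-- Generalized Hermite polynomial
`H_n^μ(x) = n! Σ_{k=0}^{⌊n/2⌋} (-1)^k (2x)^{n-2k} / (k! γ_μ(n-2k))`. -/
noncomputable def genHermite (μ : ℝ) (n : ℕ) (x : ℂ) : ℂ :=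
  (n ! : ℂ) * ∑ k ∈ Finset.range (n / 2 + 1),
    (-1) ^ k * (2 * x) ^ (n - 2 * k) / ((k ! : ℂ) * ((genGamma μ (n - 2 * k) : ℝ) : ℂ))

/-- Dunkl operator `(D_μ f)(x) = f'(x) + (μ/x)(f(x) - f(-x))`. -/
noncomputable def dunkl (μ : ℝ) (f : ℝ → ℂ) (x : ℝ) : ℂ :=
  deriv f x + ((μ / x : ℝ) : ℂ) * (f x - f (-x))

/-- Euler beta function `B(a,b) = Γ(a)Γ(b)/Γ(a+b)`. -/
noncomputable def realBeta (a b : ℝ) : ℝ :=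
  Real.Gamma a * Real.Gamma b / Real.Gamma (a + b)

open Set

/-! Split the weight as `(1 + t) ρ(t)` with the even weight `ρ(t) = |t|^{-2μ} (1 - t²)^{μ-1}`.
The odd moments of `ρ` vanish and, after `u = t²`, its even moments are beta integrals, so
`∫ tⁿ (1 + t) ρ(t) dt = B(1/2 - μ, μ) γ_{-μ}(n) / n!`: the recurrence
`B(a + 1, b) = a/(a + b) B(a, b)` reproduces the factors `n + 1 - 2μ θ_{n+1}` of `γ_{-μ}`.
Since `γ_{-μ}(n) ≥ (1 - 2μ)ⁿ n!`, the series of `e_{-μ}(x t)` may be integrated term by term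
against the weight, which turns it into `B(1/2 - μ, μ) Σ xⁿ / n!`. -/

lemma genGamma_two_mul_add_one (ν : ℝ) (k : ℕ) :
    genGamma ν (2 * k + 1) = (2 * k + 1 + 2 * ν) * genGamma ν (2 * k) := by
  rw [genGamma, if_pos (by omega)]
  push_cast
  ring

lemma genGamma_two_mul_add_two (ν : ℝ) (k : ℕ) :
    genGamma ν (2 * k + 2) = (2 * k + 2) * genGamma ν (2 * k + 1) := by
  rw [genGamma, if_neg (by omega)]
  push_cast
  ring

lemma min_one_pow_mul_factorial_le_genGamma {ν : ℝ} (hν : -1 / 2 < ν) (n : ℕ) :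
    min 1 (1 + 2 * ν) ^ n * n ! ≤ genGamma ν n := by
  set c := min 1 (1 + 2 * ν)
  have hc : 0 < c := lt_min one_pos (by linarith)
  induction n with
  | zero => simp [genGamma]
  | succ n ih =>
    have hn : (0 : ℝ) ≤ n := n.cast_nonneg
    have hstep : c * (n + 1) ≤ n + 1 + 2 * ν * (if (n + 1) % 2 = 1 then 1 else 0) := by
      have := min_le_left 1 (1 + 2 * ν)
      have := min_le_right 1 (1 + 2 * ν)
      split_ifs
      · rcases le_total 0 ν with h | h <;> nlinarith
      · nlinarith
    rw [genGamma, pow_succ, Nat.factorial_succ]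
    push_cast
    calc c ^ n * c * ((n + 1) * n !) = (c * (n + 1)) * (c ^ n * n !) := by ring
      _ ≤ _ := mul_le_mul hstep ih (by positivity) (by nlinarith [hc])

lemma genGamma_pos {ν : ℝ} (hν : -1 / 2 < ν) (n : ℕ) : 0 < genGamma ν n :=
  (mul_pos (pow_pos (lt_min one_pos (by linarith)) n) (mod_cast n.factorial_pos)).trans_le
    (min_one_pow_mul_factorial_le_genGamma hν n)

lemma summable_norm_pow_div_genGamma {ν : ℝ} (hν : -1 / 2 < ν) (z : ℂ) :
    Summable fun n => ‖z ^ n / (genGamma ν n : ℂ)‖ := by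
  set c := min 1 (1 + 2 * ν)
  have hc : 0 < c := lt_min one_pos (by linarith)
  refine Summable.of_nonneg_of_le (fun n => norm_nonneg _) (fun n => ?_)
    (Real.summable_pow_div_factorial (‖z‖ / c))
  rw [norm_div, norm_pow, Complex.norm_real, Real.norm_of_nonneg (genGamma_pos hν n).le, div_pow,
    div_div]
  exact div_le_div_of_nonneg_left (by positivity) (by positivity)
    (min_one_pow_mul_factorial_le_genGamma hν n)

section RealBeta

lemma realBeta_add_one {a b : ℝ} (ha : a ≠ 0) (hab : a + b ≠ 0) :
    realBeta (a + 1) b = a / (a + b) * realBeta a b := by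
  rw [realBeta, realBeta, Real.Gamma_add_one ha, add_right_comm, Real.Gamma_add_one hab, mul_assoc,
    mul_div_mul_comm]

variable {μ : ℝ} (hμ : μ < 1 / 2)
include hμ

lemma realBeta_nat_add_half_sub (k : ℕ) :
    realBeta (k + 1 / 2 - μ) μ = realBeta (1 / 2 - μ) μ * genGamma (-μ) (2 * k) / (2 * k)! := by
  induction k with
  | zero => simp [genGamma]
  | succ k ih =>
    have hk : (0 : ℝ) ≤ k := k.cast_nonneg
    rw [show ((k + 1 : ℕ) : ℝ) + 1 / 2 - μ = (k + 1 / 2 - μ) + 1 by push_cast; ring,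
      realBeta_add_one (by linarith) (by linarith), ih, show 2 * (k + 1) = 2 * k + 2 by ring,
      genGamma_two_mul_add_two, genGamma_two_mul_add_one, Nat.factorial_succ, Nat.factorial_succ]
    have : (k + 1 / 2 : ℝ) ≠ 0 := by positivity
    push_cast
    rw [sub_add_cancel]
    field_simp
    ring

lemma realBeta_nat_add_three_halves_sub (k : ℕ) :
    realBeta (k + 3 / 2 - μ) μ
      = realBeta (1 / 2 - μ) μ * genGamma (-μ) (2 * k + 1) / (2 * k + 1)! := by
  have hk : (0 : ℝ) ≤ k := k.cast_nonneg
  rw [show (k : ℝ) + 3 / 2 - μ = (k + 1 / 2 - μ) + 1 by ring,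
    realBeta_add_one (by linarith) (by linarith), realBeta_nat_add_half_sub hμ,
    genGamma_two_mul_add_one, Nat.factorial_succ]
  have : (k + 1 / 2 : ℝ) ≠ 0 := by positivity
  push_cast
  rw [sub_add_cancel]
  field_simp
  ring

end RealBeta

lemma betaIntegrand_eqOn_re {a b : ℝ} :
    EqOn (fun x : ℝ => x ^ (a - 1) * (1 - x) ^ (b - 1))
      (fun x : ℝ => ((x : ℂ) ^ ((a : ℂ) - 1) * (1 - (x : ℂ)) ^ ((b : ℂ) - 1)).re) (Ioo 0 1) := by
  intro x hx
  simp only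
  norm_cast
  rw [← Complex.ofReal_cpow hx.1.le, ← Complex.ofReal_cpow (by linarith [hx.2]),
    ← Complex.ofReal_mul, Complex.ofReal_re]

lemma integrableOn_rpow_mul_one_sub_rpow {a b : ℝ} (ha : 0 < a) (hb : 0 < b) :
    IntegrableOn (fun x : ℝ => x ^ (a - 1) * (1 - x) ^ (b - 1)) (Ioo 0 1) := by
  have h := Complex.betaIntegral_convergent (u := a) (v := b) (by simpa) (by simpa)
  rw [intervalIntegrable_iff_integrableOn_Ioo_of_le zero_le_one] at h
  exact IntegrableOn.congr_fun h.re betaIntegrand_eqOn_re.symm measurableSet_Ioo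

lemma integral_rpow_mul_one_sub_rpow {a b : ℝ} (ha : 0 < a) (hb : 0 < b) :
    ∫ x in Ioo 0 1, x ^ (a - 1) * (1 - x) ^ (b - 1) = realBeta a b := by
  have h := Complex.betaIntegral_convergent (u := a) (v := b) (by simpa) (by simpa)
  rw [intervalIntegrable_iff_integrableOn_Ioo_of_le zero_le_one] at h
  rw [show realBeta a b = _ from ProbabilityTheory.beta_eq_betaIntegralReal a b ha hb,
    Complex.betaIntegral, intervalIntegral.integral_of_le zero_le_one, integral_Ioc_eq_integral_Ioo,
    ← RCLike.re_to_complex, ← integral_re h]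
  exact setIntegral_congr_fun measurableSet_Ioo betaIntegrand_eqOn_re

lemma image_sq_Ioo_zero_one : (fun t : ℝ => t ^ 2) '' Ioo 0 1 = Ioo 0 1 := by
  ext u
  constructor
  · rintro ⟨t, ⟨ht0, ht1⟩, rfl⟩
    exact ⟨by positivity, by nlinarith⟩
  · rintro ⟨hu0, hu1⟩
    refine ⟨√u, ⟨Real.sqrt_pos.2 hu0, (Real.sqrt_lt' one_pos).2 (by linarith)⟩, Real.sq_sqrt hu0.le⟩

lemma abs_two_mul_smul_betaIntegrand_sq {a b t : ℝ} (ht : 0 < t) :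
    |2 * t| • ((t ^ 2) ^ (a - 1) * (1 - t ^ 2) ^ (b - 1))
      = 2 * (t ^ (2 * a - 1) * (1 - t ^ 2) ^ (b - 1)) := by
  rw [smul_eq_mul, abs_of_pos (by positivity), ← Real.rpow_natCast, ← Real.rpow_mul ht.le,
    show 2 * a - 1 = (2 : ℕ) * (a - 1) + 1 by push_cast; ring, Real.rpow_add_one ht.ne']
  ring

lemma integral_image_sq_Ioo_zero_one (g : ℝ → ℝ) :
    ∫ u in Ioo 0 1, g u = ∫ t in Ioo 0 1, |2 * t| • g (t ^ 2) := by
  conv_lhs => rw [← image_sq_Ioo_zero_one]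
  exact integral_image_eq_integral_abs_deriv_smul measurableSet_Ioo
    (fun t _ => by simpa using (hasDerivAt_pow 2 t).hasDerivWithinAt)
    ((pow_left_strictMonoOn₀ two_ne_zero).injOn.mono fun t ht => ht.1.le) g

lemma integrableOn_rpow_mul_one_sub_sq_rpow {a b : ℝ} (ha : 0 < a) (hb : 0 < b) :
    IntegrableOn (fun t : ℝ => t ^ (2 * a - 1) * (1 - t ^ 2) ^ (b - 1)) (Ioo 0 1) := by
  have h := integrableOn_rpow_mul_one_sub_rpow ha hb
  rw [← image_sq_Ioo_zero_one, integrableOn_image_iff_integrableOn_abs_deriv_smul measurableSet_Ioo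
    (fun t _ => by simpa using (hasDerivAt_pow 2 t).hasDerivWithinAt)
    ((pow_left_strictMonoOn₀ two_ne_zero).injOn.mono fun t ht => ht.1.le)] at h
  refine IntegrableOn.congr_fun (h.div_const 2) (fun t ht => ?_) measurableSet_Ioo
  rw [abs_two_mul_smul_betaIntegrand_sq ht.1]
  ring

lemma integral_rpow_mul_one_sub_sq_rpow {a b : ℝ} (ha : 0 < a) (hb : 0 < b) :
    ∫ t in Ioo 0 1, t ^ (2 * a - 1) * (1 - t ^ 2) ^ (b - 1) = realBeta a b / 2 := by
  rw [← integral_rpow_mul_one_sub_rpow ha hb,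
    integral_image_sq_Ioo_zero_one fun u => u ^ (a - 1) * (1 - u) ^ (b - 1),
    setIntegral_congr_fun measurableSet_Ioo fun t ht => abs_two_mul_smul_betaIntegrand_sq ht.1,
    integral_const_mul]
  ring

section Symmetric

variable {E : Type*} [NormedAddCommGroup E] {f : ℝ → E} {a : ℝ}

lemma IntervalIntegrable.of_comp_neg (h : IntervalIntegrable (fun t => f (-t)) volume 0 a) :
    IntervalIntegrable f volume (-a) 0 := by
  simpa using ((IntervalIntegrable.iff_comp_neg).mp h).symm

lemma intervalIntegral.integral_neg_self_self [NormedSpace ℝ E]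
    (h : IntervalIntegrable f volume 0 a) (hneg : IntervalIntegrable (fun t => f (-t)) volume 0 a) :
    ∫ t in -a..a, f t = ∫ t in 0..a, (f t + f (-t)) := by
  rw [← intervalIntegral.integral_add_adjacent_intervals hneg.of_comp_neg h,
    intervalIntegral.integral_add h hneg, intervalIntegral.integral_comp_neg, neg_zero, add_comm]

end Symmetric

noncomputable def symWeight (μ t : ℝ) : ℝ := |t| ^ (-(2 * μ)) * (1 - t ^ 2) ^ (μ - 1)

noncomputable def genExpWeight (μ t : ℝ) : ℝ := |t| ^ (-(2 * μ)) * (1 - t) ^ (μ - 1) * (1 + t) ^ μ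

section Weights

variable {μ : ℝ}

lemma pow_mul_symWeight_neg (m : ℕ) (t : ℝ) :
    (-t) ^ m * symWeight μ (-t) = (-1) ^ m * (t ^ m * symWeight μ t) := by
  rw [symWeight, symWeight, abs_neg, neg_sq, neg_pow t]
  ring

lemma pow_mul_symWeight_of_pos (m : ℕ) {t : ℝ} (ht : 0 < t) :
    t ^ m * symWeight μ t = t ^ (2 * ((m + 1) / 2 - μ) - 1) * (1 - t ^ 2) ^ (μ - 1) := by
  rw [symWeight, abs_of_pos ht, ← mul_assoc, ← Real.rpow_natCast, ← Real.rpow_add ht]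
  ring_nf

lemma genExpWeight_eq_one_add_mul_symWeight (hμ : μ ≠ 0) {t : ℝ} (ht : t ∈ Ioo (-1) 1) :
    genExpWeight μ t = (1 + t) * symWeight μ t := by
  have h1 : 0 ≤ 1 - t := by linarith [ht.2]
  have h2 : 0 ≤ 1 + t := by linarith [ht.1]
  rw [genExpWeight, symWeight, show 1 - t ^ 2 = (1 - t) * (1 + t) by ring, Real.mul_rpow h1 h2]
  nth_rw 3 [show μ = (μ - 1) + 1 by ring]
  rw [Real.rpow_add' h2 (by simpa using hμ), Real.rpow_one]
  ring

lemma pow_mul_genExpWeight_eqOn (hμ : μ ≠ 0) (n : ℕ) :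
    EqOn (fun t => t ^ n * symWeight μ t + t ^ (n + 1) * symWeight μ t)
      (fun t => t ^ n * genExpWeight μ t) (uIoo (-1) 1) := by
  intro t ht
  rw [uIoo_of_le (by norm_num)] at ht
  simp only [genExpWeight_eq_one_add_mul_symWeight hμ ht]
  ring

variable (hμ0 : 0 < μ) (hμ1 : μ < 1 / 2)
include hμ0 hμ1

lemma integrableOn_pow_mul_symWeight (m : ℕ) :
    IntegrableOn (fun t => t ^ m * symWeight μ t) (Ioo 0 1) := by
  have hm : (0 : ℝ) ≤ m := m.cast_nonneg
  refine IntegrableOn.congr_fun (integrableOn_rpow_mul_one_sub_sq_rpow (by linarith) hμ0)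
    (fun t ht => (pow_mul_symWeight_of_pos m ht.1).symm) measurableSet_Ioo

lemma integral_pow_mul_symWeight_Ioo (m : ℕ) :
    ∫ t in Ioo 0 1, t ^ m * symWeight μ t = realBeta ((m + 1) / 2 - μ) μ / 2 := by
  have hm : (0 : ℝ) ≤ m := m.cast_nonneg
  rw [setIntegral_congr_fun measurableSet_Ioo fun t ht => pow_mul_symWeight_of_pos m ht.1]
  exact integral_rpow_mul_one_sub_sq_rpow (by linarith) hμ0

lemma intervalIntegrable_pow_mul_symWeight (m : ℕ) :
    IntervalIntegrable (fun t => t ^ m * symWeight μ t) volume 0 1 :=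
  (intervalIntegrable_iff_integrableOn_Ioo_of_le zero_le_one).2
    (integrableOn_pow_mul_symWeight hμ0 hμ1 m)

lemma intervalIntegrable_pow_mul_symWeight_comp_neg (m : ℕ) :
    IntervalIntegrable (fun t => (-t) ^ m * symWeight μ (-t)) volume 0 1 := by
  simpa only [pow_mul_symWeight_neg] using
    (intervalIntegrable_pow_mul_symWeight hμ0 hμ1 m).const_mul ((-1) ^ m)

lemma integral_pow_mul_symWeight (m : ℕ) :
    ∫ t in (-1)..1, t ^ m * symWeight μ t
      = (1 + (-1) ^ m) * (realBeta ((m + 1) / 2 - μ) μ / 2) := by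
  rw [intervalIntegral.integral_neg_self_self (intervalIntegrable_pow_mul_symWeight hμ0 hμ1 m)
    (intervalIntegrable_pow_mul_symWeight_comp_neg hμ0 hμ1 m)]
  simp only [pow_mul_symWeight_neg, ← one_add_mul]
  rw [intervalIntegral.integral_const_mul, intervalIntegral.integral_of_le zero_le_one,
    integral_Ioc_eq_integral_Ioo, integral_pow_mul_symWeight_Ioo hμ0 hμ1]

lemma intervalIntegrable_pow_mul_symWeight_neg_one_one (m : ℕ) :
    IntervalIntegrable (fun t => t ^ m * symWeight μ t) volume (-1) 1 :=
  (intervalIntegrable_pow_mul_symWeight_comp_neg hμ0 hμ1 m).of_comp_neg.trans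
    (intervalIntegrable_pow_mul_symWeight hμ0 hμ1 m)

lemma intervalIntegrable_genExpWeight : IntervalIntegrable (genExpWeight μ) volume (-1) 1 := by
  simpa using ((intervalIntegrable_pow_mul_symWeight_neg_one_one hμ0 hμ1 0).add
    (intervalIntegrable_pow_mul_symWeight_neg_one_one hμ0 hμ1 1)).congr_uIoo
      (pow_mul_genExpWeight_eqOn hμ0.ne' 0)

lemma integral_pow_mul_genExpWeight (n : ℕ) :
    ∫ t in (-1)..1, t ^ n * genExpWeight μ t = realBeta (1 / 2 - μ) μ * genGamma (-μ) n / n ! := by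
  rw [← intervalIntegral.integral_congr_uIoo (pow_mul_genExpWeight_eqOn hμ0.ne' n),
    intervalIntegral.integral_add (intervalIntegrable_pow_mul_symWeight_neg_one_one hμ0 hμ1 n)
      (intervalIntegrable_pow_mul_symWeight_neg_one_one hμ0 hμ1 (n + 1)),
    integral_pow_mul_symWeight hμ0 hμ1, integral_pow_mul_symWeight hμ0 hμ1]
  -- `ring_nf` also normalizes the beta arguments, e.g. `(2k + 1)/2 - μ` to `k + 1/2 - μ`.
  obtain ⟨k, rfl | rfl⟩ := Nat.even_or_odd' n
  · rw [(even_two_mul k).neg_one_pow, (odd_two_mul_add_one k).neg_one_pow,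
      ← realBeta_nat_add_half_sub hμ1]
    push_cast
    ring_nf
  · rw [(odd_two_mul_add_one k).neg_one_pow, (odd_two_mul_add_one k).add_one.neg_one_pow,
      ← realBeta_nat_add_three_halves_sub hμ1]
    push_cast
    ring_nf

end Weights

lemma integral_tsum_mul_pow_mul {s : Set ℝ} (hs : MeasurableSet s) (hs1 : ∀ t ∈ s, |t| ≤ 1)
    {w : ℝ → ℂ} (hw : IntegrableOn w s) {c : ℕ → ℂ} (hc : Summable fun n => ‖c n‖) :
    ∫ t in s, (∑' n, c n * (t : ℂ) ^ n) * w t = ∑' n, c n * ∫ t in s, (t : ℂ) ^ n * w t := by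
  have hpow : ∀ n, ∀ᵐ t : ℝ ∂volume.restrict s, ‖(t : ℂ) ^ n‖ ≤ 1 := fun n =>
    ae_restrict_of_forall_mem hs fun t ht => by
      simpa [norm_pow] using pow_le_one₀ (abs_nonneg t) (hs1 t ht)
  have hint : ∀ n, Integrable (fun t : ℝ => c n * ((t : ℂ) ^ n * w t)) (volume.restrict s) :=
    fun n => (hw.bdd_mul (by fun_prop) (hpow n)).const_mul (c n)
  have hbound : ∀ n, ∫ t in s, ‖c n * ((t : ℂ) ^ n * w t)‖ ≤ ‖c n‖ * ∫ t in s, ‖w t‖ := by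
    intro n
    rw [← integral_const_mul]
    refine integral_mono_ae (hint n).norm (hw.norm.const_mul _) ?_
    filter_upwards [hpow n] with t ht
    rw [norm_mul, norm_mul]
    gcongr
    exact mul_le_of_le_one_left (norm_nonneg _) ht
  have hsum : Summable fun n => ∫ t in s, ‖c n * ((t : ℂ) ^ n * w t)‖ :=
    Summable.of_nonneg_of_le (fun n => integral_nonneg fun t => norm_nonneg _) hbound
      (hc.mul_right _)
  simp_rw [← integral_const_mul, integral_tsum_of_summable_integral_norm hint hsum,
    ← tsum_mul_right, mul_assoc]

lemma integral_genExp_neg_mul_genExpWeight {μ : ℝ} (hμ0 : 0 < μ) (hμ1 : μ < 1 / 2) (x : ℂ) :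
    ∫ t in (-1 : ℝ)..1, genExp (-μ) (x * t) * (genExpWeight μ t : ℂ)
      = realBeta (1 / 2 - μ) μ * Complex.exp x := by
  have hν : -1 / 2 < -μ := by linarith
  have hmoment (n : ℕ) : ∫ t in (-1 : ℝ)..1, (t : ℂ) ^ n * (genExpWeight μ t : ℂ)
      = ((realBeta (1 / 2 - μ) μ * genGamma (-μ) n / n ! : ℝ) : ℂ) := by
    rw [← integral_pow_mul_genExpWeight hμ0 hμ1, ← intervalIntegral.integral_ofReal]
    push_cast
    rfl
  have hseries : ∫ t in (-1 : ℝ)..1, genExp (-μ) (x * t) * (genExpWeight μ t : ℂ)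
      = ∑' n, x ^ n / (genGamma (-μ) n : ℂ) *
          ∫ t in (-1 : ℝ)..1, (t : ℂ) ^ n * (genExpWeight μ t : ℂ) := by
    simp only [intervalIntegral.integral_of_le (neg_le_self zero_le_one)]
    refine (setIntegral_congr_fun measurableSet_Ioc fun t _ => ?_).trans
      (integral_tsum_mul_pow_mul measurableSet_Ioc (fun t ht => abs_le.2 ⟨ht.1.le, ht.2⟩)
        (intervalIntegrable_genExpWeight hμ0 hμ1).1.ofReal (summable_norm_pow_div_genGamma hν x))
    simp only [genExp, mul_pow, mul_div_right_comm]
    rfl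
  rw [hseries, Complex.exp_eq_exp_ℂ, NormedSpace.exp_eq_tsum_div, ← tsum_mul_left]
  refine tsum_congr fun n => ?_
  have : (genGamma (-μ) n : ℂ) ≠ 0 := mod_cast (genGamma_pos hν n).ne'
  rw [hmoment]
  push_cast
  field_simp

/-- For `0 < μ < 1/2` and `x ∈ ℂ`:
`e^x = (1/B(1/2-μ, μ)) ∫_{-1}^1 e_{-μ}(xt) |t|^{-2μ} (1-t)^{μ-1} (1+t)^μ dt`. -/
theorem exp_eq_genExp_neg_integral (μ : ℝ) (hμ0 : 0 < μ) (hμ1 : μ < 1/2) (x : ℂ) :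
    Complex.exp x =
      ((1 / realBeta (1/2 - μ) μ : ℝ) : ℂ) *
        ∫ t in (-1 : ℝ)..1,
          genExp (-μ) (x * t) * ((|t| ^ (-(2 * μ)) * (1 - t) ^ (μ - 1) * (1 + t) ^ μ : ℝ) : ℂ) := by
  have hB : (realBeta (1 / 2 - μ) μ : ℂ) ≠ 0 :=
    Complex.ofReal_ne_zero.2 (ProbabilityTheory.beta_pos (by linarith) hμ0).ne'
  change _ = _ * ∫ t in (-1 : ℝ)..1, genExp (-μ) (x * t) * (genExpWeight μ t : ℂ)
  rw [integral_genExp_neg_mul_genExpWeight hμ0 hμ1, Complex.ofReal_div, Complex.ofReal_one, one_div,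
    ← mul_assoc, inv_mul_cancel₀ hB, one_mul]
end

section
/- Let μ > −1/2 be real, λ ∈ ℂ, n ≥ 1, and let f : ℝ → ℂ be f(x) = H_n^μ(λx). Then for every x ≠ 0, (D_μ f)(x) = 2λn H_{n−1}^μ(λx). -/
open MeasureTheory
open scoped BigOperators Nat

/-!
The normalized monomials `z ^ j / γ_μ(j)` form a ladder for `D_μ`: the odd part of `y ^ (j+1)`
contributes `2μθ_{j+1} y ^ j` to its Dunkl derivative, so by the recursion defining `γ_μ` the
operator sends `(c y) ^ (j+1) / γ_μ(j+1)` to `c (c y) ^ j / γ_μ(j)` and kills constants.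
`H_n^μ(λ y)` is a combination of such monomials with `c = 2λ`; applying `D_μ` termwise, the
constant term (present for even `n`) drops out and what remains is `2λn H_{n-1}^μ(λ y)`.
-/

open Finset

lemma genGamma_pos_s6 {μ : ℝ} (hμ : -(1/2) < μ) : ∀ n, 0 < genGamma μ n
  | 0 => one_pos
  | n + 1 => by
    rw [genGamma]
    apply mul_pos _ (genGamma_pos_s6 hμ n)
    split <;> nlinarith [Nat.cast_nonneg (α := ℝ) n]

lemma genHermite_eq_sum (μ : ℝ) (n : ℕ) (z : ℂ) :
    genHermite μ n z = n ! * ∑ k ∈ range (n / 2 + 1),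
      (-1) ^ k / k ! * ((2 * z) ^ (n - 2 * k) / genGamma μ (n - 2 * k)) := by
  simp only [genHermite, mul_div_mul_comm]

lemma hasDerivAt_mul_ofReal_pow (c : ℂ) (m : ℕ) (x : ℝ) :
    HasDerivAt (fun y : ℝ => (c * y) ^ m) (m * (c * x) ^ (m - 1) * c) x := by
  have := (hasDerivAt_pow m (c * (x : ℂ))).comp (x : ℂ) ((hasDerivAt_id (x : ℂ)).const_mul c)
  simpa using this.comp_ofReal

lemma one_sub_neg_one_pow (m : ℕ) :
    1 - (-1 : ℂ) ^ m = 2 * ((if m % 2 = 1 then 1 else 0 : ℝ) : ℂ) := by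
  rcases Nat.even_or_odd m with h | h
  · simp [h.neg_one_pow, Nat.even_iff.mp h]
  · simp [h.neg_one_pow, Nat.odd_iff.mp h]; norm_num

section Dunkl

variable (μ : ℝ)

lemma dunkl_const (a : ℂ) (x : ℝ) : dunkl μ (fun _ => a) x = 0 := by
  simp [dunkl]

lemma dunkl_const_mul (a : ℂ) (f : ℝ → ℂ) (x : ℝ) :
    dunkl μ (fun y => a * f y) x = a * dunkl μ f x := by
  simp only [dunkl, deriv_const_mul_field]
  ring

lemma dunkl_finset_sum {ι : Type*} (s : Finset ι) (f : ι → ℝ → ℂ) {x : ℝ}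
    (hf : ∀ i ∈ s, DifferentiableAt ℝ (f i) x) :
    dunkl μ (fun y => ∑ i ∈ s, f i y) x = ∑ i ∈ s, dunkl μ (f i) x := by
  simp only [dunkl, deriv_fun_sum hf, ← sum_sub_distrib, mul_sum, sum_add_distrib]

lemma dunkl_mul_ofReal_pow_succ (c : ℂ) (j : ℕ) {x : ℝ} (hx : x ≠ 0) :
    dunkl μ (fun y : ℝ => (c * y) ^ (j + 1)) x * genGamma μ j
      = genGamma μ (j + 1) * c * (c * x) ^ j := by
  have hodd : (c * x) ^ (j + 1) - (c * ((-x : ℝ) : ℂ)) ^ (j + 1)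
      = 2 * ((if (j + 1) % 2 = 1 then 1 else 0 : ℝ) : ℂ) * (c * x) ^ (j + 1) := by
    rw [Complex.ofReal_neg, mul_neg, neg_pow, ← one_sub_neg_one_pow]
    ring
  have hxc : (x : ℂ) ≠ 0 := Complex.ofReal_ne_zero.mpr hx
  rw [dunkl, (hasDerivAt_mul_ofReal_pow c (j + 1) x).deriv, hodd, genGamma]
  push_cast
  field_simp
  ring

variable {μ}

lemma dunkl_mul_ofReal_pow_succ_div_genGamma (hμ : -(1/2) < μ) (c : ℂ) (j : ℕ)
    {x : ℝ} (hx : x ≠ 0) :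
    dunkl μ (fun y : ℝ => (c * y) ^ (j + 1) / genGamma μ (j + 1)) x
      = c * ((c * x) ^ j / genGamma μ j) := by
  have hγ : ∀ n, (genGamma μ n : ℂ) ≠ 0 := fun n => by exact_mod_cast (genGamma_pos_s6 hμ n).ne'
  simp only [div_eq_inv_mul, dunkl_const_mul,
    eq_div_of_mul_eq (hγ j) (dunkl_mul_ofReal_pow_succ μ c j hx)]
  field_simp [hγ]

end Dunkl

theorem dunkl_genHermite_general (μ : ℝ) (hμ : -(1/2) < μ) (lam : ℂ) (n : ℕ)
    (x : ℝ) (hx : x ≠ 0) :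
    dunkl μ (fun y : ℝ => genHermite μ n (lam * y)) x
      = 2 * lam * n * genHermite μ (n - 1) (lam * x) := by
  obtain _ | m := n
  · simp [genHermite, dunkl_const]
  simp only [genHermite_eq_sum, ← mul_assoc 2 lam, dunkl_const_mul]
  rw [dunkl_finset_sum _ _ _ (fun k _ => by fun_prop)]
  simp only [dunkl_const_mul]
  have hsub : range (m / 2 + 1) ⊆ range ((m + 1) / 2 + 1) := by
    intro k; simp only [mem_range]; omega
  rw [← sum_subset hsub]
  · simp only [Nat.factorial_succ, mul_sum]
    refine Finset.sum_congr rfl fun k hk => ?_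
    rw [mem_range] at hk
    rw [show m + 1 - 2 * k = m - 2 * k + 1 by omega,
      dunkl_mul_ofReal_pow_succ_div_genGamma hμ _ _ hx]
    push_cast
    ring
  · intro k hk hk'
    simp only [mem_range] at hk hk'
    rw [show m + 1 - 2 * k = 0 by omega]
    simp [dunkl_const]

/-- For `μ > -1/2`, `λ ∈ ℂ`, `n ≥ 1` and `f(x) = H_n^μ(λx)`:
for every `x ≠ 0`, `(D_μ f)(x) = 2λn H_{n-1}^μ(λx)`. -/
theorem dunkl_genHermite (μ : ℝ) (hμ : -(1/2) < μ) (lam : ℂ) (n : ℕ) (hn : 1 ≤ n)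
    (x : ℝ) (hx : x ≠ 0) :
    dunkl μ (fun y : ℝ => genHermite μ n (lam * y)) x
      = 2 * lam * n * genHermite μ (n - 1) (lam * x) :=
  dunkl_genHermite_general μ hμ lam n x hx
end
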